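/- Let F be a field and let n, m be positive integers. Let G = ([n], E) and H = ([n], E') be directed graphs each with exactly m arcs, and fix bijections α: [m] → E and β: [m] → E'. Let S_G ∈ T(n×n×m, F) be the 3-way array whose k-th frontal slice is the elementary matrix E_{i,j} where (i,j) = α(k), and define S_H ∈ T(n×n×m, F) analogously using β. Let 𝒢₁ be a subgroup of GL(n, F) containing all n×n permutation matrices and 𝒢₂ a subgroup of GL(m, F) containing all m×m permutation matrices. Then there exist T ∈ 𝒢₁ and R ∈ 𝒢₂ such that Tᵗ S_G T = S_H^R if and only if G and H are isomorphic as directed graphs, i.e., there is a bijection σ: [n] → [n] such that (i,j) ∈ E if and only if (σ(i), σ(j)) ∈ E'. -/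

import Mathlib

open Matrix
open Finset


lemma card_le_of_rows {n : ℕ} {F : Type*} [Field F] (T T' : Matrix (Fin n) (Fin n) F)
    (h1 : T * T' = 1) (P Q : Finset (Fin n))
    (h : ∀ i ∈ P, ∀ a, T i a ≠ 0 → a ∈ Q) : P.card ≤ Q.card := by
  classical
  have hli : LinearIndependent F (fun i : ↥P => fun a : ↥Q => T i a) := by
    rw [Fintype.linearIndependent_iff]
    intro c hc
    set c' : Fin n → F := fun i => if hi : i ∈ P then c ⟨i, hi⟩ else 0 with hc'
    have hvm : Matrix.vecMul c' T = 0 := by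
      funext a
      have key : Matrix.vecMul c' T a = ∑ i : ↥P, c i * T i a := by
        rw [Matrix.vecMul, dotProduct]
        rw [← Finset.sum_subset (Finset.subset_univ P)
          (fun x _ hx => by simp [hc', hx])]
        rw [← Finset.sum_coe_sort P (fun i => c' i * T i a)]
        exact Finset.sum_congr rfl (fun i _ => by simp [hc', i.2])
      by_cases ha : a ∈ Q
      · have h2 := congrFun hc ⟨a, ha⟩
        simp only [Finset.sum_apply, Pi.smul_apply, smul_eq_mul, Pi.zero_apply] at h2
        rw [key, Pi.zero_apply]
        exact h2
      · rw [key, Pi.zero_apply]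
        apply Finset.sum_eq_zero
        intro i _
        rcases eq_or_ne (T i a) 0 with h0 | h0
        · rw [h0, mul_zero]
        · exact absurd (h i i.2 a h0) ha
    have hc0 : c' = 0 := by
      have h3 := congrArg (fun v => Matrix.vecMul v T') hvm
      simpa [Matrix.vecMul_vecMul, h1] using h3
    intro i
    have := congrFun hc0 i
    simpa [hc', i.2] using this
  have hcard := hli.fintype_card_le_finrank
  simpa [Module.finrank_fintype_fun_eq_card] using hcard

lemma conj_entry {n : ℕ} {F : Type*} [Field F] (M : Matrix (Fin n) (Fin n) F)
    (i j a b : Fin n) :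
    (Mᵀ * Matrix.single i j (1 : F) * M) a b = M i a * M j b := by
  rw [Matrix.mul_apply]
  rw [Finset.sum_eq_single j]
  · rw [Matrix.mul_apply, Finset.sum_eq_single i]
    · simp [Matrix.single, Matrix.transpose_apply]
    · intro c _ hc; simp [Matrix.single, hc.symm]
    · simp
  · intro c _ hc
    rw [Matrix.mul_apply, Finset.sum_eq_zero, zero_mul]
    intro d _
    simp [Matrix.single, hc.symm]
  · simp

lemma sum_std_entry {n m : ℕ} {F : Type*} [Field F] (E' : Finset (Fin n × Fin n))
    (p : Fin m → Fin n × Fin n) (hp : ∀ k, p k ∈ E') (r : Fin m → F)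
    (a b : Fin n) (hab : (a, b) ∉ E') :
    (∑ k' : Fin m, r k' • Matrix.single (p k').1 (p k').2 (1 : F)) a b = 0 := by
  rw [Matrix.sum_apply]
  apply Finset.sum_eq_zero
  intro k _
  have : ¬((p k).1 = a ∧ (p k).2 = b) := by
    rintro ⟨h1, h2⟩
    apply hab
    have : p k = (a, b) := Prod.ext h1 h2
    rw [← this]; exact hp k
  simp only [Pi.smul_apply, Matrix.smul_apply, Matrix.single]
  rw [Matrix.of_apply]
  rw [if_neg this]
  simp

open scoped Classical in
noncomputable def sigL {n : ℕ} (E : Finset (Fin n × Fin n))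
    (rel : Fin n → Fin n → Prop) (i : Fin n) : Finset (Fin n) × Finset (Fin n) :=
  (Finset.univ.filter (fun b => ∃ j, (i, j) ∈ E ∧ rel j b),
   Finset.univ.filter (fun b => ∃ j, (j, i) ∈ E ∧ rel j b))

open scoped Classical in
noncomputable def sigR {n : ℕ} (E' : Finset (Fin n × Fin n))
    (a : Fin n) : Finset (Fin n) × Finset (Fin n) :=
  (Finset.univ.filter (fun b => (a, b) ∈ E'),
   Finset.univ.filter (fun b => (b, a) ∈ E'))

lemma mem_sigL1 {n : ℕ} {E : Finset (Fin n × Fin n)} {rel : Fin n → Fin n → Prop}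
    {i b : Fin n} : b ∈ (sigL E rel i).1 ↔ ∃ j, (i, j) ∈ E ∧ rel j b := by
  simp [sigL]

lemma mem_sigL2 {n : ℕ} {E : Finset (Fin n × Fin n)} {rel : Fin n → Fin n → Prop}
    {i b : Fin n} : b ∈ (sigL E rel i).2 ↔ ∃ j, (j, i) ∈ E ∧ rel j b := by
  simp [sigL]

lemma mem_sigR1 {n : ℕ} {E' : Finset (Fin n × Fin n)} {a b : Fin n} :
    b ∈ (sigR E' a).1 ↔ (a, b) ∈ E' := by simp [sigR]

lemma mem_sigR2 {n : ℕ} {E' : Finset (Fin n × Fin n)} {a b : Fin n} :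
    b ∈ (sigR E' a).2 ↔ (b, a) ∈ E' := by simp [sigR]

lemma core {n : ℕ} (E E' : Finset (Fin n × Fin n))
    (suppT suppS : Fin n → Fin n → Prop)
    (h1 : ∀ i j a b, (i, j) ∈ E → suppT i a → suppT j b → (a, b) ∈ E')
    (h2 : ∀ a b c d, (a, b) ∈ E' → suppS a c → suppS b d → (c, d) ∈ E)
    (tot1 : ∀ i, ∃ a, suppT i a ∧ suppS a i)
    (tot2 : ∀ a, ∃ i, suppT i a ∧ suppS a i)
    (h5 : ∀ P Q : Finset (Fin n), (∀ i ∈ P, ∀ a, suppT i a → a ∈ Q) → P.card ≤ Q.card)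
    (h6 : ∀ P Q : Finset (Fin n), (∀ a ∈ P, ∀ i, suppS a i → i ∈ Q) → P.card ≤ Q.card) :
    ∃ σ : Equiv.Perm (Fin n), ∀ p : Fin n × Fin n, p ∈ E ↔ (σ p.1, σ p.2) ∈ E' := by
  classical
  set rel : Fin n → Fin n → Prop := fun i a => suppT i a ∧ suppS a i with hrel
  set f : Fin n → Finset (Fin n) × Finset (Fin n) := sigL E rel with hf
  set g : Fin n → Finset (Fin n) × Finset (Fin n) := sigR E' with hg
  set le : Finset (Fin n) × Finset (Fin n) → Finset (Fin n) × Finset (Fin n) → Prop :=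
    fun s t => s.1 ⊆ t.1 ∧ s.2 ⊆ t.2 with hle
  -- L2
  have L2 : ∀ i a, suppT i a → le (f i) (g a) := by
    intro i a hTa
    constructor
    · intro b hb
      rw [hf] at hb; rw [mem_sigL1] at hb
      obtain ⟨j, hij, hTb, _⟩ := hb
      rw [hg, mem_sigR1]
      exact h1 i j a b hij hTa hTb
    · intro b hb
      rw [hf] at hb; rw [mem_sigL2] at hb
      obtain ⟨j, hji, hTb, _⟩ := hb
      rw [hg, mem_sigR2]
      exact h1 j i b a hji hTb hTa
  -- L3
  have L3 : ∀ a c, suppS a c → le (g a) (f c) := by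
    intro a c hSc
    constructor
    · intro b hb
      rw [hg, mem_sigR1] at hb
      obtain ⟨j, hTjb, hSbj⟩ := tot2 b
      rw [hf, mem_sigL1]
      exact ⟨j, h2 a b c j hb hSc hSbj, hTjb, hSbj⟩
    · intro b hb
      rw [hg, mem_sigR2] at hb
      obtain ⟨j, hTjb, hSbj⟩ := tot2 b
      rw [hf, mem_sigL2]
      exact ⟨j, h2 b a j c hb hSbj hSc, hTjb, hSbj⟩
  -- L1 : rel i a → f i = g a
  have L1 : ∀ i a, suppT i a → suppS a i → f i = g a := by
    intro i a hTa hSa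
    have l2 := L2 i a hTa
    apply Prod.ext
    · apply Finset.Subset.antisymm l2.1
      intro b hb
      rw [hg, mem_sigR1] at hb
      obtain ⟨j, hTjb, hSbj⟩ := tot2 b
      rw [hf, mem_sigL1]
      exact ⟨j, h2 a b i j hb hSa hSbj, hTjb, hSbj⟩
    · apply Finset.Subset.antisymm l2.2
      intro b hb
      rw [hg, mem_sigR2] at hb
      obtain ⟨j, hTjb, hSbj⟩ := tot2 b
      rw [hf, mem_sigL2]
      exact ⟨j, h2 b a j i hb hSbj hSa, hTjb, hSbj⟩
  -- C : counting for up-sets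
  have C : ∀ s, (univ.filter (fun i => le s (f i))).card
      = (univ.filter (fun a => le s (g a))).card := by
    intro s
    apply Nat.le_antisymm
    · apply h5
      intro i hi a hTa
      rw [Finset.mem_filter] at hi ⊢
      refine ⟨Finset.mem_univ a, ?_⟩
      have l2 := L2 i a hTa
      exact ⟨hi.2.1.trans l2.1, hi.2.2.trans l2.2⟩
    · apply h6
      intro a ha c hSc
      rw [Finset.mem_filter] at ha ⊢
      refine ⟨Finset.mem_univ c, ?_⟩
      have l3 := L3 a c hSc
      exact ⟨ha.2.1.trans l3.1, ha.2.2.trans l3.2⟩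
  -- D : counting for fibers, by strong induction on 2n - card
  have D : ∀ N : ℕ, ∀ s, 2 * n - (s.1.card + s.2.card) = N →
      (univ.filter (fun i => f i = s)).card = (univ.filter (fun a => g a = s)).card := by
    intro N
    induction N using Nat.strong_induction_on with
    | _ N ih =>
    intro s hs
    have hcard1 : s.1.card ≤ n := by
      simpa using Finset.card_le_card (Finset.subset_univ s.1)
    have hcard2 : s.2.card ≤ n := by
      simpa using Finset.card_le_card (Finset.subset_univ s.2)
    -- split the ≥-filter into = and >
    have split : ∀ (h : Fin n → Finset (Fin n) × Finset (Fin n)),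
        (univ.filter (fun i => le s (h i))).card
        = (univ.filter (fun i => h i = s)).card
          + (univ.filter (fun i => le s (h i) ∧ h i ≠ s)).card := by
      intro h
      rw [← Finset.card_union_of_disjoint]
      · congr 1
        ext i
        simp only [Finset.mem_union, Finset.mem_filter, Finset.mem_univ, true_and]
        constructor
        · intro hi
          by_cases he : h i = s
          · exact Or.inl he
          · exact Or.inr ⟨hi, he⟩
        · rintro (he | ⟨hi, _⟩)
          · rw [he]; exact ⟨Finset.Subset.refl _, Finset.Subset.refl _⟩
          · exact hi
      · rw [Finset.disjoint_left]
        intro i hi hi'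
        rw [Finset.mem_filter] at hi hi'
        exact hi'.2.2 hi.2
    -- strict part equality via IH
    have strict : (univ.filter (fun i => le s (f i) ∧ f i ≠ s)).card
        = (univ.filter (fun a => le s (g a) ∧ g a ≠ s)).card := by
      have key : ∀ (h : Fin n → Finset (Fin n) × Finset (Fin n)),
          (univ.filter (fun i => le s (h i) ∧ h i ≠ s)).card
          = ∑ s' ∈ (univ.filter (fun s' => le s s' ∧ s' ≠ s) :
              Finset (Finset (Fin n) × Finset (Fin n))),
              (univ.filter (fun i => h i = s')).card := by
        intro h
        rw [Finset.card_eq_sum_card_fiberwise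
          (f := h) (t := univ.filter (fun s' => le s s' ∧ s' ≠ s))]
        · apply Finset.sum_congr rfl
          intro s' hs'
          rw [Finset.mem_filter] at hs'
          congr 1
          ext i
          simp only [Finset.mem_filter, Finset.mem_univ, true_and]
          constructor
          · rintro ⟨_, he⟩; exact he
          · intro he
            exact ⟨by rw [he]; exact hs'.2, he⟩
        · intro i hi
          rw [Finset.mem_coe, Finset.mem_filter] at hi ⊢
          exact ⟨Finset.mem_univ _, hi.2⟩
      rw [key f, key g]
      apply Finset.sum_congr rfl
      intro s' hs'
      rw [Finset.mem_filter] at hs'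
      obtain ⟨_, ⟨hle1, hle2⟩, hne⟩ := hs'
      -- measure decreases
      have hlt : s.1.card + s.2.card < s'.1.card + s'.2.card := by
        have c1 : s.1.card ≤ s'.1.card := Finset.card_le_card hle1
        have c2 : s.2.card ≤ s'.2.card := Finset.card_le_card hle2
        have : s.1 ≠ s'.1 ∨ s.2 ≠ s'.2 := by
          by_contra hcon
          push_neg at hcon
          exact hne (Prod.ext hcon.1 hcon.2).symm
        rcases this with h' | h'
        · have : s.1.card < s'.1.card :=
            Finset.card_lt_card (Finset.ssubset_iff_subset_ne.2 ⟨hle1, h'⟩)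
          omega
        · have : s.2.card < s'.2.card :=
            Finset.card_lt_card (Finset.ssubset_iff_subset_ne.2 ⟨hle2, h'⟩)
          omega
      have hcard1' : s'.1.card ≤ n := by
        simpa using Finset.card_le_card (Finset.subset_univ s'.1)
      have hcard2' : s'.2.card ≤ n := by
        simpa using Finset.card_le_card (Finset.subset_univ s'.2)
      exact ih (2 * n - (s'.1.card + s'.2.card)) (by omega) s' rfl
    have hC := C s
    have hsf := split f
    have hsg := split g
    omega
  -- build σ from equal fibers
  have hfib : ∀ s, Fintype.card {i // f i = s} = Fintype.card {a // g a = s} := by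
    intro s
    rw [Fintype.card_subtype, Fintype.card_subtype]
    exact D _ s rfl
  let e : ∀ s, {i // f i = s} ≃ {a // g a = s} := fun s => Fintype.equivOfCardEq (hfib s)
  let σ : Equiv.Perm (Fin n) :=
    (Equiv.sigmaFiberEquiv f).symm.trans
      ((Equiv.sigmaCongrRight e).trans (Equiv.sigmaFiberEquiv g))
  have hσ : ∀ i, g (σ i) = f i := by
    intro i
    show g ((Equiv.sigmaFiberEquiv g)
      ((Equiv.sigmaCongrRight e) ((Equiv.sigmaFiberEquiv f).symm i))) = f i
    have h1' : (Equiv.sigmaFiberEquiv f).symm i = ⟨f i, ⟨i, rfl⟩⟩ := rfl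
    rw [h1']
    have h2' : (Equiv.sigmaCongrRight e) (⟨f i, ⟨i, rfl⟩⟩ :
        Σ s, {x // f x = s}) = ⟨f i, e (f i) ⟨i, rfl⟩⟩ := rfl
    rw [h2']
    exact (e (f i) ⟨i, rfl⟩).2
  refine ⟨σ, ?_⟩
  rintro ⟨i, j⟩
  obtain ⟨a, hTa, hSa⟩ := tot1 i
  obtain ⟨b, hTb, hSb⟩ := tot1 j
  have hfa := L1 i a hTa hSa
  have hfb := L1 j b hTb hSb
  have gσi : g (σ i) = g a := by rw [hσ i, hfa]
  have gσj : g (σ j) = g b := by rw [hσ j, hfb]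
  simp only
  constructor
  · intro hij
    have hab : (a, b) ∈ E' := h1 i j a b hij hTa hTb
    have m1 : a ∈ (g (σ j)).2 := by rw [gσj, hg, mem_sigR2]; exact hab
    have m2 : (a, σ j) ∈ E' := by rw [hg] at m1; exact mem_sigR2.mp m1
    have m3 : σ j ∈ (g (σ i)).1 := by rw [gσi, hg, mem_sigR1]; exact m2
    rw [hg] at m3
    exact mem_sigR1.mp m3
  · intro hσij
    have m3 : σ j ∈ (g a).1 := by
      rw [← gσi, hg, mem_sigR1]; exact hσij
    have m2 : (a, σ j) ∈ E' := by rw [hg] at m3; exact mem_sigR1.mp m3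
    have m1 : a ∈ (g b).2 := by
      rw [← gσj, hg, mem_sigR2]; exact m2
    have hab : (a, b) ∈ E' := by rw [hg] at m1; exact mem_sigR2.mp m1
    exact h2 a b i j hab hSa hSb

section helpers
variable {n : ℕ} {F : Type*} [Field F]

lemma permMatrix_apply (σ : Equiv.Perm (Fin n)) (i j : Fin n) :
    (σ.permMatrix F) i j = if σ i = j then 1 else 0 := by
  rw [Equiv.Perm.permMatrix, PEquiv.toMatrix_toPEquiv_eq, Matrix.submatrix_apply, Matrix.one_apply, id_eq]

lemma permMatrix_mul_inv (σ : Equiv.Perm (Fin n)) :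
    (σ.permMatrix F) * (σ⁻¹.permMatrix F) = 1 := by
  show (σ.toPEquiv.toMatrix : Matrix (Fin n) (Fin n) F) * σ⁻¹.toPEquiv.toMatrix = 1
  rw [← PEquiv.toMatrix_trans, ← Equiv.toPEquiv_trans]
  have : σ.trans σ⁻¹ = Equiv.refl (Fin n) := Equiv.self_trans_symm σ
  rw [this, Equiv.toPEquiv_refl, PEquiv.toMatrix_refl]

/-- the GL element given by a permutation matrix -/
noncomputable def permGL (σ : Equiv.Perm (Fin n)) : GL (Fin n) F :=
  ⟨σ.permMatrix F, σ⁻¹.permMatrix F, permMatrix_mul_inv σ, by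
    have := permMatrix_mul_inv (F := F) σ⁻¹
    simpa using this⟩

@[simp] lemma permGL_coe (σ : Equiv.Perm (Fin n)) :
    ((permGL σ : GL (Fin n) F) : Matrix (Fin n) (Fin n) F) = σ.permMatrix F := rfl

end helpers

/-- For directed graphs `G = ([n], E)` and `H = ([n], E')` each with `m` arcs,
with the 3-way arrays `S_G`, `S_H` whose frontal slices are the elementary matrices of the
arcs, and subgroups `G₁ ≤ GL(n,F)`, `G₂ ≤ GL(m,F)` containing all permutation matrices:
`S_G` and `S_H` are in the same orbit (`Tᵗ S_G T = S_H ^ R` for some `T ∈ G₁`, `R ∈ G₂`)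
iff `G ≅ H` as directed graphs. -/
theorem stmt_0 (F : Type*) [Field F] (n m : ℕ) (hn : 0 < n) (hm : 0 < m)
    (E E' : Finset (Fin n × Fin n))
    (α : Fin m ≃ {p : Fin n × Fin n // p ∈ E})
    (β : Fin m ≃ {p : Fin n × Fin n // p ∈ E'})
    (G₁ : Subgroup (GL (Fin n) F)) (G₂ : Subgroup (GL (Fin m) F))
    (hG₁ : ∀ σ : Equiv.Perm (Fin n), ∀ g : GL (Fin n) F,
      (g : Matrix (Fin n) (Fin n) F) = σ.permMatrix F → g ∈ G₁)
    (hG₂ : ∀ τ : Equiv.Perm (Fin m), ∀ g : GL (Fin m) F,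
      (g : Matrix (Fin m) (Fin m) F) = τ.permMatrix F → g ∈ G₂) :
    (∃ T ∈ G₁, ∃ R ∈ G₂, ∀ k : Fin m,
        (T : Matrix (Fin n) (Fin n) F)ᵀ *
            Matrix.single (α k).1.1 (α k).1.2 (1 : F) *
            (T : Matrix (Fin n) (Fin n) F)
          = ∑ k' : Fin m, (R : Matrix (Fin m) (Fin m) F) k' k •
              Matrix.single (β k').1.1 (β k').1.2 (1 : F))
      ↔ ∃ σ : Equiv.Perm (Fin n), ∀ p : Fin n × Fin n, p ∈ E ↔ (σ p.1, σ p.2) ∈ E' := by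
  constructor
  · -- hard direction
    rintro ⟨T, hT, R, hR, hk⟩
    set Tm : Matrix (Fin n) (Fin n) F := (T : Matrix (Fin n) (Fin n) F) with hTm
    set Sm : Matrix (Fin n) (Fin n) F := ((T⁻¹ : GL (Fin n) F) : Matrix (Fin n) (Fin n) F)
      with hSm
    have hTS : Tm * Sm = 1 := by
      rw [hTm, hSm, ← Units.val_mul, mul_inv_cancel, Units.val_one]
    have hST : Sm * Tm = 1 := by
      rw [hTm, hSm, ← Units.val_mul, inv_mul_cancel, Units.val_one]
    -- ★1
    have star1 : ∀ i j a b, (i, j) ∈ E → (a, b) ∉ E' → Tm i a * Tm j b = 0 := by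
      intro i j a b hij hab
      have hk' := hk (α.symm ⟨(i, j), hij⟩)
      rw [Equiv.apply_symm_apply] at hk'
      have := congrArg (fun M => M a b) hk'
      simp only at this
      rw [conj_entry] at this
      rw [this]
      exact sum_std_entry E' (fun k' => (β k').1) (fun k' => (β k').2)
        (fun k' => (R : Matrix (Fin m) (Fin m) F) k' (α.symm ⟨(i, j), hij⟩)) a b hab
    -- derived equation for the inverse
    have hk2 : ∀ l : Fin m,
        Smᵀ * Matrix.single (β l).1.1 (β l).1.2 (1 : F) * Sm
          = ∑ k : Fin m, ((R⁻¹ : GL (Fin m) F) : Matrix (Fin m) (Fin m) F) k l •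
              Matrix.single (α k).1.1 (α k).1.2 (1 : F) := by
      intro l
      set Rm : Matrix (Fin m) (Fin m) F := (R : Matrix (Fin m) (Fin m) F) with hRm
      set Nm : Matrix (Fin m) (Fin m) F := ((R⁻¹ : GL (Fin m) F) : Matrix (Fin m) (Fin m) F)
        with hNm
      have hRN : Rm * Nm = 1 := by
        rw [hRm, hNm, ← Units.val_mul, mul_inv_cancel, Units.val_one]
      have e1 : ∑ k : Fin m, Nm k l •
          (Tmᵀ * Matrix.single (α k).1.1 (α k).1.2 (1 : F) * Tm)
          = Matrix.single (β l).1.1 (β l).1.2 (1 : F) := by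
        calc ∑ k : Fin m, Nm k l •
            (Tmᵀ * Matrix.single (α k).1.1 (α k).1.2 (1 : F) * Tm)
            = ∑ k : Fin m, Nm k l • ∑ k' : Fin m, Rm k' k •
                Matrix.single (β k').1.1 (β k').1.2 (1 : F) := by
              apply Finset.sum_congr rfl
              intro k _
              rw [hk k]
          _ = ∑ k : Fin m, ∑ k' : Fin m, (Rm k' k * Nm k l) •
                Matrix.single (β k').1.1 (β k').1.2 (1 : F) := by
              apply Finset.sum_congr rfl
              intro k _
              rw [Finset.smul_sum]
              apply Finset.sum_congr rfl
              intro k' _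
              rw [smul_smul, mul_comm]
          _ = ∑ k' : Fin m, (∑ k : Fin m, Rm k' k * Nm k l) •
                Matrix.single (β k').1.1 (β k').1.2 (1 : F) := by
              rw [Finset.sum_comm]
              apply Finset.sum_congr rfl
              intro k' _
              rw [Finset.sum_smul]
          _ = ∑ k' : Fin m, ((1 : Matrix (Fin m) (Fin m) F) k' l) •
                Matrix.single (β k').1.1 (β k').1.2 (1 : F) := by
              apply Finset.sum_congr rfl
              intro k' _
              rw [← hRN, Matrix.mul_apply]
          _ = Matrix.single (β l).1.1 (β l).1.2 (1 : F) := by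
              rw [Finset.sum_eq_single l]
              · rw [Matrix.one_apply_eq, one_smul]
              · intro k' _ hk'
                rw [Matrix.one_apply_ne hk', zero_smul]
              · intro h; exact absurd (Finset.mem_univ l) h
      have e2 : ∑ k : Fin m, Nm k l •
          (Tmᵀ * Matrix.single (α k).1.1 (α k).1.2 (1 : F) * Tm)
          = Tmᵀ * (∑ k : Fin m, Nm k l •
              Matrix.single (α k).1.1 (α k).1.2 (1 : F)) * Tm := by
        rw [Finset.mul_sum, Finset.sum_mul]
        apply Finset.sum_congr rfl
        intro k _
        rw [Matrix.mul_smul, Matrix.smul_mul]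
      rw [← e1, e2]
      calc Smᵀ * (Tmᵀ * (∑ k : Fin m, Nm k l •
              Matrix.single (α k).1.1 (α k).1.2 (1 : F)) * Tm) * Sm
          = (Tm * Sm)ᵀ * (∑ k : Fin m, Nm k l •
              Matrix.single (α k).1.1 (α k).1.2 (1 : F)) * (Tm * Sm) := by
            rw [Matrix.transpose_mul]
            noncomm_ring
        _ = _ := by rw [hTS, Matrix.transpose_one, Matrix.one_mul, Matrix.mul_one]
    -- ★2
    have star2 : ∀ a b c d, (a, b) ∈ E' → (c, d) ∉ E → Sm a c * Sm b d = 0 := by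
      intro a b c d hab hcd
      have hk' := hk2 (β.symm ⟨(a, b), hab⟩)
      rw [Equiv.apply_symm_apply] at hk'
      have := congrArg (fun M => M c d) hk'
      simp only at this
      rw [conj_entry] at this
      rw [this]
      exact sum_std_entry E (fun k => (α k).1) (fun k => (α k).2)
        (fun k => ((R⁻¹ : GL (Fin m) F) : Matrix (Fin m) (Fin m) F) k
          (β.symm ⟨(a, b), hab⟩)) c d hcd
    -- totality
    have tot1 : ∀ i, ∃ a, Tm i a ≠ 0 ∧ Sm a i ≠ 0 := by
      intro i
      have h1 : ∑ a, Tm i a * Sm a i = 1 := by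
        have := congrArg (fun M => M i i) hTS
        simpa [Matrix.mul_apply, Matrix.one_apply] using this
      obtain ⟨a, _, ha⟩ := Finset.exists_ne_zero_of_sum_ne_zero
        (by rw [h1]; exact one_ne_zero)
      exact ⟨a, mul_ne_zero_iff.mp ha⟩
    have tot2 : ∀ a, ∃ i, Tm i a ≠ 0 ∧ Sm a i ≠ 0 := by
      intro a
      have h1 : ∑ i, Sm a i * Tm i a = 1 := by
        have := congrArg (fun M => M a a) hST
        simpa [Matrix.mul_apply, Matrix.one_apply] using this
      obtain ⟨i, _, hi⟩ := Finset.exists_ne_zero_of_sum_ne_zero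
        (by rw [h1]; exact one_ne_zero)
      have := mul_ne_zero_iff.mp hi
      exact ⟨i, this.2, this.1⟩
    -- apply core
    apply core E E' (fun i a => Tm i a ≠ 0) (fun a i => Sm a i ≠ 0)
    · intro i j a b hij hTa hTb
      by_contra hab
      rcases mul_ne_zero hTa hTb with h
      exact h (star1 i j a b hij hab)
    · intro a b c d hab hSa hSb
      by_contra hcd
      exact (mul_ne_zero hSa hSb) (star2 a b c d hab hcd)
    · exact tot1
    · intro a; obtain ⟨i, h1, h2⟩ := tot2 a; exact ⟨i, h1, h2⟩
    · intro P Q h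
      exact card_le_of_rows Tm Sm hTS P Q h
    · intro P Q h
      exact card_le_of_rows Sm Tm hST P Q h
  · -- easy direction
    rintro ⟨σ, hσ⟩
    let arcE : {p : Fin n × Fin n // p ∈ E} ≃ {p : Fin n × Fin n // p ∈ E'} :=
      { toFun := fun p => ⟨(σ p.1.1, σ p.1.2), (hσ p.1).mp p.2⟩
        invFun := fun q => ⟨(σ⁻¹ q.1.1, σ⁻¹ q.1.2), by
          have h := hσ (σ⁻¹ q.1.1, σ⁻¹ q.1.2)
          simp only [Equiv.Perm.inv_def, Equiv.apply_symm_apply] at h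
          exact h.mpr q.2⟩
        left_inv := fun p => by
          apply Subtype.ext
          simp
        right_inv := fun q => by
          apply Subtype.ext
          simp }
    let τ : Fin m ≃ Fin m := (α.trans arcE).trans β.symm
    refine ⟨permGL σ, hG₁ σ _ rfl, permGL τ.symm, hG₂ τ.symm _ rfl, ?_⟩
    intro k
    have hRs : ∑ k' : Fin m, ((permGL τ.symm : GL (Fin m) F) :
        Matrix (Fin m) (Fin m) F) k' k •
        Matrix.single (β k').1.1 (β k').1.2 (1 : F)
        = Matrix.single (β (τ k)).1.1 (β (τ k)).1.2 (1 : F) := by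
      rw [Finset.sum_eq_single (τ k)]
      · rw [permGL_coe, permMatrix_apply]
        simp
      · intro k' _ hk'
        rw [permGL_coe, permMatrix_apply, if_neg, zero_smul]
        intro h
        exact hk' (by rw [← h]; simp)
      · intro h; exact absurd (Finset.mem_univ _) h
    rw [hRs]
    have hβτ : ((β (τ k)) : Fin n × Fin n) = (σ (α k).1.1, σ (α k).1.2) := by
      show ((β ((α.trans arcE).trans β.symm k)) : Fin n × Fin n) = _
      simp only [Equiv.trans_apply, Equiv.apply_symm_apply]
      rfl
    have hβτ1 : (β (τ k)).1.1 = σ (α k).1.1 := by rw [hβτ]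
    have hβτ2 : (β (τ k)).1.2 = σ (α k).1.2 := by rw [hβτ]
    ext a b
    rw [conj_entry, hβτ1, hβτ2, permGL_coe, permMatrix_apply, permMatrix_apply]
    rw [Matrix.single]
    rw [Matrix.of_apply]
    by_cases h1 : σ (α k).1.1 = a <;> by_cases h2 : σ (α k).1.2 = b <;>
      simp [h1, h2]
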